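/- For all n ≥ 0, b_n = Σ_{i=0}^{⌊n/2⌋} ⌊(n-1-2i)²/4⌋·|B(i)|. -/

import Mathlib

/-- `pre2 s` is the multiset of all pairwise products of two distinct entries
(by position) of the multiset `s`, i.e. the summands of `e₂` evaluated at `s`. -/
def pre2 (s : Multiset ℕ) : Multiset ℕ := (Multiset.powersetCard 2 s).map Multiset.prod

open Classical in
/-- The finset of binary partitions of `n`: partitions all of whose parts are powers of 2. -/
noncomputable def binaryPartitions (n : ℕ) : Finset (Nat.Partition n) :=
  Finset.univ.filter fun l => ∀ p ∈ l.parts, ∃ i : ℕ, p = 2 ^ i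

/-- `b n = m₂(ImB₂(n))`: the total number of parts equal to 2 in the image of `pre2`
on binary partitions of `n` with at least two parts; by injectivity this equals
`∑_{λ ∈ B(n)} m₁(λ)·m₂(λ)`. -/
noncomputable def b (n : ℕ) : ℕ :=
  ∑ l ∈ binaryPartitions n, (l.parts.count 1) * (l.parts.count 2)

/-
A binary partition is its ones together with twice a binary partition: halving the parts
different from 1 identifies `B(n)` with the disjoint union of the `B(i)`, `2i ≤ n`, in such a way
that `m₁(λ) = n - 2i` and `m₂(λ) = m₁(ν)`. Hence `b n = ∑_{i ≤ n/2} (n - 2i) c i` with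
`c i = ∑_{ν ∈ B(i)} m₁(ν)`. Removing one part 1 gives `c (i + 1) = c i + |B(i)|`, so
`c i = ∑_{j < i} |B(j)|`, and exchanging the two sums leaves the weight
`∑_{j < i ≤ n/2} (n - 2i) = ⌊(n - 1 - 2j)² / 4⌋` on `|B(j)|`.
-/

open Finset

lemma sum_range_half_eq_sq_div_four (d : ℕ) :
    ∑ k ∈ range (d / 2), ((d : ℤ) - 2 - 2 * k) = ((d : ℤ) - 1) ^ 2 / 4 := by
  induction d using Nat.twoStepInduction with
  | zero => rfl
  | one => rfl
  | more d ih _ =>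
    have hsq : (((d + 2 : ℕ) : ℤ) - 1) ^ 2 = ((d : ℤ) - 1) ^ 2 + d * 4 := by push_cast; ring
    rw [show (d + 2) / 2 = d / 2 + 1 by omega, sum_range_succ', hsq,
      Int.add_mul_ediv_right _ _ four_ne_zero, ← ih]
    push_cast
    congr 1
    · exact sum_congr rfl fun k _ => by ring
    · ring

lemma sum_Ico_sub_two_mul_eq_sq_div_four (n j : ℕ) (hj : j ≤ n / 2) :
    ∑ i ∈ Ico (j + 1) (n / 2 + 1), ((n : ℤ) - 2 * i) = ((n : ℤ) - 1 - 2 * j) ^ 2 / 4 := by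
  rw [sum_Ico_eq_sum_range, show n / 2 + 1 - (j + 1) = (n - 2 * j) / 2 by omega]
  convert sum_range_half_eq_sq_div_four (n - 2 * j) using 2 <;>
    push_cast [Nat.cast_sub (by omega : 2 * j ≤ n)] <;> ring

lemma sum_range_sub_two_mul_mul_sum_range (n : ℕ) (f : ℕ → ℤ) :
    ∑ i ∈ range (n / 2 + 1), ((n : ℤ) - 2 * i) * ∑ j ∈ range i, f j
      = ∑ j ∈ range (n / 2 + 1), ((n : ℤ) - 1 - 2 * j) ^ 2 / 4 * f j := by
  simp only [mul_sum, range_eq_Ico]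
  rw [← sum_Ico_Ico_comm']
  refine sum_congr rfl fun j hj => ?_
  rw [← sum_Ico_sub_two_mul_eq_sq_div_four n j (by simp at hj; omega), sum_mul]

lemma exists_eq_two_mul_pow_of_ne_one {p : ℕ} (hp : ∃ i : ℕ, p = 2 ^ i) (h1 : p ≠ 1) :
    ∃ k : ℕ, p = 2 * 2 ^ k := by
  obtain ⟨_ | k, rfl⟩ := hp
  · exact absurd rfl h1
  · exact ⟨k, pow_succ' 2 k⟩

lemma mem_binaryPartitions {n : ℕ} {l : n.Partition} :
    l ∈ binaryPartitions n ↔ ∀ p ∈ l.parts, ∃ i : ℕ, p = 2 ^ i := by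
  simp [binaryPartitions]

namespace Nat.Partition

lemma sigma_ext {x y : Σ i : ℕ, i.Partition} (h : x.2.parts = y.2.parts) : x = y := by
  obtain ⟨i, p⟩ := x
  obtain ⟨j, q⟩ := y
  obtain rfl : i = j := by rw [← p.parts_sum, ← q.parts_sum]; exact congrArg _ h
  exact congrArg _ (Nat.Partition.ext h)

def halveNonOnes {n : ℕ} (l : n.Partition) : Σ i : ℕ, i.Partition :=
  ⟨_, { parts := (l.parts.filter (· ≠ 1)).map (· / 2)
        parts_pos := by
          simp only [Multiset.mem_map, Multiset.mem_filter]
          rintro _ ⟨p, ⟨hp, hp1⟩, rfl⟩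
          have := l.parts_pos hp
          omega
        parts_sum := rfl }⟩

def padOnesDouble (n : ℕ) (x : Σ i : ℕ, i.Partition) (hx : 2 * x.1 ≤ n) : n.Partition where
  parts := Multiset.replicate (n - 2 * x.1) 1 + x.2.parts.map (2 * ·)
  parts_pos := by
    simp only [Multiset.mem_add, Multiset.mem_replicate, Multiset.mem_map]
    rintro _ (⟨-, rfl⟩ | ⟨q, hq, rfl⟩)
    · exact one_pos
    · have := x.2.parts_pos hq
      omega
  parts_sum := by
    rw [Multiset.sum_add, Multiset.sum_replicate, Multiset.sum_map_mul_left, Multiset.map_id',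
      x.2.parts_sum, smul_eq_mul, mul_one, Nat.sub_add_cancel hx]

@[simp]
lemma parts_halveNonOnes {n : ℕ} (l : n.Partition) :
    (halveNonOnes l).2.parts = (l.parts.filter (· ≠ 1)).map (· / 2) := rfl

@[simp]
lemma parts_padOnesDouble (n : ℕ) (x : Σ i : ℕ, i.Partition) (hx : 2 * x.1 ≤ n) :
    (padOnesDouble n x hx).parts = Multiset.replicate (n - 2 * x.1) 1 + x.2.parts.map (2 * ·) :=
  rfl

lemma count_one_padOnesDouble (n : ℕ) (x : Σ i : ℕ, i.Partition) (hx : 2 * x.1 ≤ n) :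
    (padOnesDouble n x hx).parts.count 1 = n - 2 * x.1 := by
  simp

lemma count_two_padOnesDouble (n : ℕ) (x : Σ i : ℕ, i.Partition) (hx : 2 * x.1 ≤ n) :
    (padOnesDouble n x hx).parts.count 2 = x.2.parts.count 1 := by
  simpa [Multiset.count_replicate] using
    Multiset.count_map_eq_count' (2 * ·) x.2.parts (mul_right_injective₀ two_ne_zero) 1

variable {n : ℕ} {l : n.Partition}

lemma map_two_mul_halveNonOnes (hl : l ∈ binaryPartitions n) :
    (halveNonOnes l).2.parts.map (2 * ·) = l.parts.filter (· ≠ 1) := by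
  rw [parts_halveNonOnes, Multiset.map_map]
  refine (Multiset.map_congr rfl fun p hp => ?_).trans (Multiset.map_id _)
  rw [Multiset.mem_filter] at hp
  obtain ⟨k, rfl⟩ := exists_eq_two_mul_pow_of_ne_one (mem_binaryPartitions.1 hl p hp.1) hp.2
  simp

lemma halveNonOnes_mem (hl : l ∈ binaryPartitions n) :
    (halveNonOnes l).2 ∈ binaryPartitions (halveNonOnes l).1 := by
  rw [mem_binaryPartitions, parts_halveNonOnes]
  simp only [Multiset.mem_map, Multiset.mem_filter]
  rintro _ ⟨p, ⟨hp, hp1⟩, rfl⟩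
  obtain ⟨k, rfl⟩ := exists_eq_two_mul_pow_of_ne_one (mem_binaryPartitions.1 hl p hp) hp1
  exact ⟨k, by simp⟩

lemma count_one_add_two_mul_halveNonOnes (hl : l ∈ binaryPartitions n) :
    l.parts.count 1 + 2 * (halveNonOnes l).1 = n := by
  have hsplit := congrArg Multiset.sum (Multiset.filter_add_not (· = 1) l.parts)
  rw [Multiset.sum_add, Multiset.filter_eq', Multiset.sum_replicate, smul_eq_mul, mul_one] at hsplit
  have hhalf : (l.parts.filter (· ≠ 1)).sum = 2 * (halveNonOnes l).1 := by
    rw [← map_two_mul_halveNonOnes hl, Multiset.sum_map_mul_left, Multiset.map_id',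
      (halveNonOnes l).2.parts_sum]
  rw [← hhalf]
  exact hsplit.trans l.parts_sum

lemma padOnesDouble_halveNonOnes (hl : l ∈ binaryPartitions n) (hx : 2 * (halveNonOnes l).1 ≤ n) :
    padOnesDouble n (halveNonOnes l) hx = l := by
  ext1
  have hones : n - 2 * (halveNonOnes l).1 = l.parts.count 1 := by
    have := count_one_add_two_mul_halveNonOnes hl
    omega
  rw [parts_padOnesDouble, map_two_mul_halveNonOnes hl, hones, ← Multiset.filter_eq']
  exact Multiset.filter_add_not _ _

lemma halveNonOnes_padOnesDouble (x : Σ i : ℕ, i.Partition) (hx : 2 * x.1 ≤ n) :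
    halveNonOnes (padOnesDouble n x hx) = x := by
  apply sigma_ext
  have hfilter : (padOnesDouble n x hx).parts.filter (· ≠ 1) = x.2.parts.map (2 * ·) := by
    rw [parts_padOnesDouble, Multiset.filter_add,
      Multiset.filter_eq_nil.2 fun _ ha => not_not.2 (Multiset.eq_of_mem_replicate ha), zero_add,
      Multiset.filter_eq_self]
    simp only [Multiset.mem_map]
    rintro _ ⟨q, -, rfl⟩
    omega
  simp [hfilter, Multiset.map_map]

lemma padOnesDouble_mem (x : Σ i : ℕ, i.Partition) (hx : 2 * x.1 ≤ n)
    (hb : x.2 ∈ binaryPartitions x.1) : padOnesDouble n x hx ∈ binaryPartitions n := by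
  simp only [mem_binaryPartitions, parts_padOnesDouble, Multiset.mem_add, Multiset.mem_replicate,
    Multiset.mem_map]
  rintro _ (⟨-, rfl⟩ | ⟨q, hq, rfl⟩)
  · exact ⟨0, rfl⟩
  · obtain ⟨k, rfl⟩ := mem_binaryPartitions.1 hb q hq
    exact ⟨k + 1, Nat.pow_succ'.symm⟩

end Nat.Partition

open Nat.Partition in
lemma b_eq_sum_sub_two_mul_mul (n : ℕ) :
    b n = ∑ i ∈ range (n / 2 + 1), (n - 2 * i) * ∑ ν ∈ binaryPartitions i, ν.parts.count 1 := by
  simp only [mul_sum]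
  rw [sum_sigma', b]
  symm
  refine sum_bij' (fun x hx => padOnesDouble n x ?_) (fun l _ => halveNonOnes l) ?_ ?_ ?_ ?_ ?_
  · simp only [mem_sigma, mem_range] at hx
    omega
  · intro x hx
    exact padOnesDouble_mem x _ (mem_sigma.1 hx).2
  · intro l hl
    have := count_one_add_two_mul_halveNonOnes hl
    exact mem_sigma.2 ⟨mem_range.2 (by omega), halveNonOnes_mem hl⟩
  · intro x _
    exact halveNonOnes_padOnesDouble x _
  · intro l hl
    exact padOnesDouble_halveNonOnes hl _
  · intro x _
    rw [count_one_padOnesDouble, count_two_padOnesDouble]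

open Nat.Partition in
lemma sum_count_one_binaryPartitions_succ (i : ℕ) :
    ∑ ν ∈ binaryPartitions (i + 1), ν.parts.count 1
      = ∑ μ ∈ binaryPartitions i, μ.parts.count 1 + #(binaryPartitions i) := by
  classical
  let e := partitionWithPartEquiv le_rfl (Nat.le_add_left 1 i)
  rw [← sum_filter_of_ne (s := binaryPartitions (i + 1)) (p := fun ν => 1 ∈ ν.parts)
      fun ν _ => Multiset.count_ne_zero.1,
    card_eq_sum_ones, ← sum_add_distrib]
  refine sum_bij' (fun ν hν => e ⟨ν, (mem_filter.1 hν).2⟩) (fun μ _ => (e.symm μ).1) ?_ ?_ ?_ ?_ ?_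
  · intro ν hν
    rw [mem_binaryPartitions, partitionWithPartEquiv_apply_parts]
    exact fun p hp => mem_binaryPartitions.1 (mem_filter.1 hν).1 p (Multiset.mem_of_mem_erase hp)
  · intro μ hμ
    refine mem_filter.2 ⟨mem_binaryPartitions.2 ?_, (e.symm μ).2⟩
    rw [partitionWithPartEquiv_symm_apply_parts]
    intro p hp
    rcases Multiset.mem_cons.1 hp with rfl | hp
    · exact ⟨0, rfl⟩
    · exact mem_binaryPartitions.1 hμ p hp
  · intro ν _
    simp
  · intro μ _
    simp
  · intro ν hν
    have := Multiset.count_pos.2 (mem_filter.1 hν).2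
    rw [partitionWithPartEquiv_apply_parts, Multiset.count_erase_self]
    exact (Nat.sub_add_cancel this).symm

lemma sum_count_one_binaryPartitions (i : ℕ) :
    ∑ ν ∈ binaryPartitions i, ν.parts.count 1 = ∑ j ∈ range i, #(binaryPartitions j) := by
  induction i with
  | zero => simp
  | succ i ih => rw [sum_count_one_binaryPartitions_succ, ih, sum_range_succ]

theorem stmt_8 (n : ℕ) :
    (b n : ℤ) = ∑ i ∈ Finset.range (n / 2 + 1),
      (((n : ℤ) - 1 - 2 * (i : ℤ)) ^ 2 / 4) * ((binaryPartitions i).card : ℤ) := by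
  rw [← sum_range_sub_two_mul_mul_sum_range, b_eq_sum_sub_two_mul_mul, Nat.cast_sum]
  refine sum_congr rfl fun i hi => ?_
  rw [sum_count_one_binaryPartitions, Nat.cast_mul, Nat.cast_sub (by simp at hi; omega),
    Nat.cast_sum, Nat.cast_mul, Nat.cast_ofNat]
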